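/- arXiv:2210.14088 — 4 statements merged into one kernel-verified Lean document; each statement's English description precedes it below -/
import Mathlib

section
/- Let P be a diagonalizable real n×n matrix, P = V D V⁻¹ with D diagonal. Suppose x satisfies ‖(I - P)x‖₁ ≤ ε and every diagonal entry λ of D relevant to x’s components off the fixed space satisfies |1 - λ| ≥ δ > 0, with x orthogonal (in the eigenbasis decomposition) to the eigenspace of eigenvalue 1. Then ‖x‖₁ ≤ (‖V‖₁ ‖V⁻¹‖₁ / δ) ε. -/
/-- Induced matrix 1-norm (maximum absolute column sum), written as a
supremum over columns. -/
noncomputable def matNorm1 {n : ℕ} (M : Matrix (Fin n) (Fin n) ℝ) : ℝ :=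
  sSup {t : ℝ | ∃ j : Fin n, t = ∑ i, |M i j|}

lemma matNorm1_col_le {n : ℕ} (M : Matrix (Fin n) (Fin n) ℝ) (j : Fin n) :
    ∑ i, |M i j| ≤ matNorm1 M := by
  apply le_csSup
  · have h : {t : ℝ | ∃ j : Fin n, t = ∑ i, |M i j|}
      = Set.range (fun j => ∑ i, |M i j|) := by
      ext t; simp [Set.range, eq_comm]
    rw [h]
    exact (Set.finite_range _).bddAbove
  · exact ⟨j, rfl⟩

lemma mulVec_norm1_le {n : ℕ} (M : Matrix (Fin n) (Fin n) ℝ) (v : Fin n → ℝ) :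
    ∑ i, |(M.mulVec v) i| ≤ matNorm1 M * ∑ i, |v i| := by
  calc ∑ i, |(M.mulVec v) i| ≤ ∑ i, ∑ j, |M i j * v j| := by
        apply Finset.sum_le_sum; intro i _
        simp only [Matrix.mulVec, dotProduct]
        exact Finset.abs_sum_le_sum_abs _ _
    _ = ∑ j, (∑ i, |M i j|) * |v j| := by
        rw [Finset.sum_comm]
        simp [abs_mul, Finset.sum_mul]
    _ ≤ ∑ j, matNorm1 M * |v j| := by
        apply Finset.sum_le_sum; intro j _
        exact mul_le_mul_of_nonneg_right (matNorm1_col_le M j) (abs_nonneg _)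
    _ = matNorm1 M * ∑ j, |v j| := by rw [Finset.mul_sum]

/-- Bauer–Fike-type residual bound: if `P = V D V⁻¹` is diagonalizable, the
residual `(I - P)x` has 1-norm at most `ε`, and every eigenvalue relevant to
`x` (i.e. with nonzero component of `x` in the eigenbasis) is `δ`-separated
from `1` (in particular `x` has no component in the eigenspace of `1`), then
`‖x‖₁ ≤ (‖V‖₁‖V⁻¹‖₁/δ) ε`. -/
theorem stmt10 (n : ℕ) (P V D : Matrix (Fin n) (Fin n) ℝ)
    (hV : IsUnit V.det) (hD : D.IsDiag) (hP : P = V * D * V⁻¹)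
    (x : Fin n → ℝ) (ε δ : ℝ) (hδ : 0 < δ)
    (hres : ∑ i, |((1 - P).mulVec x) i| ≤ ε)
    (heig : ∀ i, (V⁻¹.mulVec x) i ≠ 0 → δ ≤ |1 - D i i|) :
    ∑ i, |x i| ≤ (matNorm1 V * matNorm1 V⁻¹ / δ) * ε := by
  have hε : 0 ≤ ε := le_trans (Finset.sum_nonneg fun i _ => abs_nonneg _) hres
  rcases Nat.eq_zero_or_pos n with hn | hn
  · subst hn
    have h0 : {t : ℝ | ∃ j : Fin 0, t = ∑ i, |V i j|} = ∅ := by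
      ext t; simp
    simp [matNorm1, h0, Real.sSup_empty]
  -- main case
  set y := V⁻¹.mulVec x with hy
  have hVV : V * V⁻¹ = 1 := Matrix.mul_nonsing_inv V hV
  have hVV' : V⁻¹ * V = 1 := Matrix.nonsing_inv_mul V hV
  have hx : V.mulVec y = x := by
    rw [hy, Matrix.mulVec_mulVec, hVV, Matrix.one_mulVec]
  have hkey : ∀ i, (V⁻¹.mulVec ((1 - P).mulVec x)) i = (1 - D i i) * y i := by
    have hmat : V⁻¹ * (1 - P) = (1 - D) * V⁻¹ := by
      rw [hP]
      rw [Matrix.mul_sub, Matrix.sub_mul, Matrix.mul_one, Matrix.one_mul]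
      congr 1
      calc V⁻¹ * (V * D * V⁻¹) = (V⁻¹ * V) * (D * V⁻¹) := by
            simp only [Matrix.mul_assoc]
        _ = D * V⁻¹ := by rw [hVV', Matrix.one_mul]
    intro i
    have : V⁻¹.mulVec ((1 - P).mulVec x) = (1 - D).mulVec y := by
      rw [Matrix.mulVec_mulVec, hmat, ← Matrix.mulVec_mulVec, ← hy]
    rw [this]
    have hD' : (D.mulVec y) i = D i i * y i := by
      simp only [Matrix.mulVec, dotProduct]
      rw [Finset.sum_eq_single i]
      · intro b _ hb
        rw [hD (Ne.symm hb), zero_mul]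
      · intro h; exact absurd (Finset.mem_univ i) h
    rw [Matrix.sub_mulVec, Matrix.one_mulVec]
    simp [hD', sub_mul]
  have hstep1 : δ * ∑ i, |y i| ≤ ∑ i, |(V⁻¹.mulVec ((1 - P).mulVec x)) i| := by
    rw [Finset.mul_sum]
    apply Finset.sum_le_sum
    intro i _
    rw [hkey i, abs_mul]
    by_cases hyi : y i = 0
    · simp [hyi]
    · exact mul_le_mul_of_nonneg_right (heig i hyi) (abs_nonneg _)
  have hstep2 : ∑ i, |(V⁻¹.mulVec ((1 - P).mulVec x)) i| ≤ matNorm1 V⁻¹ * ε := by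
    calc _ ≤ matNorm1 V⁻¹ * ∑ i, |((1 - P).mulVec x) i| := mulVec_norm1_le _ _
      _ ≤ matNorm1 V⁻¹ * ε := by
        apply mul_le_mul_of_nonneg_left hres
        have j : Fin n := ⟨0, hn⟩
        exact le_trans (Finset.sum_nonneg fun i _ => abs_nonneg _) (matNorm1_col_le V⁻¹ j)
  have hy1 : ∑ i, |y i| ≤ matNorm1 V⁻¹ * ε / δ := by
    rw [le_div_iff₀ hδ, mul_comm]
    exact le_trans hstep1 hstep2
  have hVnn : 0 ≤ matNorm1 V := by
    have j : Fin n := ⟨0, hn⟩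
    exact le_trans (Finset.sum_nonneg fun i _ => abs_nonneg _) (matNorm1_col_le V j)
  calc ∑ i, |x i| = ∑ i, |(V.mulVec y) i| := by rw [hx]
    _ ≤ matNorm1 V * ∑ i, |y i| := mulVec_norm1_le _ _
    _ ≤ matNorm1 V * (matNorm1 V⁻¹ * ε / δ) := mul_le_mul_of_nonneg_left hy1 hVnn
    _ = (matNorm1 V * matNorm1 V⁻¹ / δ) * ε := by ring
end

section
/- Let P be a row-stochastic matrix on Fin n with ergodicity coefficient τ(P) < 1, stationary probability vector π, and let π̂ be a probability vector with residual ‖π̂ᵀP - π̂ᵀ‖₁ ≤ ε. Then ‖π̂ - π‖₁ ≤ ε/(1 - τ(P)). -/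
/-- Residual-to-error bound: if `τ(P) < 1`, `π` is stationary and the
residual of the probability vector `π̂` satisfies `‖π̂ᵀP - π̂ᵀ‖₁ ≤ ε`, then
`‖π̂ - π‖₁ ≤ ε/(1 - τ(P))`. -/
theorem stmt13 (n : ℕ) (P : Matrix (Fin n) (Fin n) ℝ)
    (hpos : ∀ i j, 0 ≤ P i j) (hrow : ∀ i, ∑ j, P i j = 1)
    (τ : ℝ)
    (hτ : τ = sSup {t : ℝ | ∃ v : Fin n → ℝ, (∑ k, v k) = 0 ∧ (∑ k, |v k|) = 1 ∧
          t = ∑ j, |∑ i, v i * P i j|})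
    (hτ1 : τ < 1)
    (π πhat : Fin n → ℝ)
    (hπ0 : ∀ j, 0 ≤ π j) (hπ1 : ∑ j, π j = 1)
    (hstat : ∀ j, ∑ i, π i * P i j = π j)
    (hπhat0 : ∀ j, 0 ≤ πhat j) (hπhat1 : ∑ j, πhat j = 1)
    (ε : ℝ)
    (hres : (∑ j, |(∑ i, πhat i * P i j) - πhat j|) ≤ ε) :
    (∑ k, |πhat k - π k|) ≤ ε / (1 - τ) := by
  have h1τ : 0 < 1 - τ := by linarith
  set v : Fin n → ℝ := fun k => πhat k - π k with hv
  set s : ℝ := ∑ k, |v k| with hs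
  have hsum0 : ∑ k, v k = 0 := by
    simp [hv, Finset.sum_sub_distrib, hπ1, hπhat1]
  set A : Fin n → ℝ := fun j => ∑ i, v i * P i j with hA
  have hfact1 : ∑ j, |v j - A j| ≤ ε := by
    have key : ∀ j, v j - A j = πhat j - ∑ i, πhat i * P i j := by
      intro j
      have := hstat j
      simp only [hv, hA, sub_mul, Finset.sum_sub_distrib]
      linarith
    calc ∑ j, |v j - A j| = ∑ j, |(∑ i, πhat i * P i j) - πhat j| := by
          refine Finset.sum_congr rfl fun j _ => ?_
          rw [key j, abs_sub_comm]
      _ ≤ ε := hres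
  have hfact2 : ∑ j, |A j| ≤ τ * s := by
    rcases eq_or_lt_of_le (show (0:ℝ) ≤ s from Finset.sum_nonneg fun k _ => abs_nonneg _) with h0 | h0
    · have hv0 : ∀ k, v k = 0 := by
        intro k
        exact abs_eq_zero.mp
          ((Finset.sum_eq_zero_iff_of_nonneg (fun k _ => abs_nonneg (v k))).mp h0.symm k
            (Finset.mem_univ k))
      have hA0 : ∀ j, A j = 0 := by intro j; simp [hA, hv0]
      simp [hA0, ← h0]
    · set w : Fin n → ℝ := fun k => v k / s with hw
      have hw0 : ∑ k, w k = 0 := by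
        simp [hw, ← Finset.sum_div, hsum0]
      have hw1 : ∑ k, |w k| = 1 := by
        simp only [hw, abs_div, abs_of_pos h0, ← Finset.sum_div, ← hs]
        exact div_self h0.ne'
      have hmem : (∑ j, |∑ i, w i * P i j|) ∈ {t : ℝ | ∃ v : Fin n → ℝ, (∑ k, v k) = 0 ∧
          (∑ k, |v k|) = 1 ∧ t = ∑ j, |∑ i, v i * P i j|} := ⟨w, hw0, hw1, rfl⟩
      have hbdd : BddAbove {t : ℝ | ∃ v : Fin n → ℝ, (∑ k, v k) = 0 ∧ (∑ k, |v k|) = 1 ∧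
          t = ∑ j, |∑ i, v i * P i j|} := by
        refine ⟨1, ?_⟩
        rintro t ⟨u, hu0, hu1, rfl⟩
        calc ∑ j, |∑ i, u i * P i j| ≤ ∑ j, ∑ i, |u i| * P i j := by
              refine Finset.sum_le_sum fun j _ => ?_
              refine (Finset.abs_sum_le_sum_abs _ _).trans ?_
              refine Finset.sum_le_sum fun i _ => ?_
              rw [abs_mul, abs_of_nonneg (hpos i j)]
          _ = ∑ i, |u i| * ∑ j, P i j := by rw [Finset.sum_comm]; simp [Finset.mul_sum]
          _ = 1 := by simp [hrow, hu1]
      have hle : (∑ j, |∑ i, w i * P i j|) ≤ τ := hτ ▸ le_csSup hbdd hmem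
      have heq : ∑ j, |∑ i, w i * P i j| = (∑ j, |A j|) / s := by
        rw [Finset.sum_div]
        refine Finset.sum_congr rfl fun j _ => ?_
        rw [← abs_of_pos h0, ← abs_div]
        congr 1
        simp [hw, hA, Finset.sum_div, div_mul_eq_mul_div]
      rw [heq] at hle
      calc ∑ j, |A j| = ((∑ j, |A j|) / s) * s := by field_simp
        _ ≤ τ * s := mul_le_mul_of_nonneg_right hle h0.le
  have htri : s ≤ ε + τ * s := by
    calc s = ∑ k, |v k| := hs
      _ ≤ ∑ k, (|v k - A k| + |A k|) := by
          refine Finset.sum_le_sum fun k _ => ?_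
          have := abs_add_le (v k - A k) (A k)
          simpa using this
      _ = (∑ k, |v k - A k|) + ∑ k, |A k| := Finset.sum_add_distrib
      _ ≤ ε + τ * s := add_le_add hfact1 hfact2
  show s ≤ ε / (1 - τ)
  rw [le_div_iff₀ h1τ]
  nlinarith
end

section
/- Let P be a row-stochastic matrix on Fin n and let Q be another row-stochastic matrix on Fin n with ‖P - Q‖ ≤ ε where ‖M‖ denotes the induced norm sup{‖vᵀM‖₁ : ‖v‖₁ = 1}. If π_P and π_Q are stationary probability vectors of P and Q respectively, and δ = 1 - τ(P) > 0, then ‖π_P - π_Q‖₁ ≤ ε/δ. -/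
/-- Seneta perturbation bound for stationary distributions: if `‖P - Q‖ ≤ ε`
in the induced ℓ¹ norm and `δ = 1 - τ(P) > 0`, then
`‖π_P - π_Q‖₁ ≤ ε/δ`. -/
theorem stmt14 (n : ℕ) (P Q : Matrix (Fin n) (Fin n) ℝ)
    (hposP : ∀ i j, 0 ≤ P i j) (hrowP : ∀ i, ∑ j, P i j = 1)
    (hposQ : ∀ i j, 0 ≤ Q i j) (hrowQ : ∀ i, ∑ j, Q i j = 1)
    (ε : ℝ)
    (hpert : ∀ v : Fin n → ℝ, (∑ k, |v k|) = 1 →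
      (∑ j, |∑ i, v i * (P i j - Q i j)|) ≤ ε)
    (τ : ℝ)
    (hτ : τ = sSup {t : ℝ | ∃ v : Fin n → ℝ, (∑ k, v k) = 0 ∧ (∑ k, |v k|) = 1 ∧
          t = ∑ j, |∑ i, v i * P i j|})
    (hδ : 0 < 1 - τ)
    (πP πQ : Fin n → ℝ)
    (hπP0 : ∀ j, 0 ≤ πP j) (hπP1 : ∑ j, πP j = 1)
    (hπPstat : ∀ j, ∑ i, πP i * P i j = πP j)
    (hπQ0 : ∀ j, 0 ≤ πQ j) (hπQ1 : ∑ j, πQ j = 1)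
    (hπQstat : ∀ j, ∑ i, πQ i * Q i j = πQ j) :
    (∑ k, |πP k - πQ k|) ≤ ε / (1 - τ) := by
  set d : Fin n → ℝ := fun k => πP k - πQ k with hd
  set S : ℝ := ∑ k, |d k| with hS
  have hS0 : 0 ≤ S := Finset.sum_nonneg fun k _ => abs_nonneg _
  -- ε ≥ 0
  have hπQabs : (∑ k, |πQ k|) = 1 := by
    rw [← hπQ1]; exact Finset.sum_congr rfl fun k _ => abs_of_nonneg (hπQ0 k)
  have hεRHS : (∑ j, |∑ i, πQ i * (P i j - Q i j)|) ≤ ε := hpert πQ hπQabs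
  have hε0 : 0 ≤ ε :=
    le_trans (Finset.sum_nonneg fun j _ => abs_nonneg _) hεRHS
  -- key identity: d j - ∑ i, d i * P i j = ∑ i, πQ i * (P i j - Q i j)
  have hkey : ∀ j, d j - ∑ i, d i * P i j = ∑ i, πQ i * (P i j - Q i j) := by
    intro j
    have h1 : (∑ i, d i * P i j) = (∑ i, πP i * P i j) - ∑ i, πQ i * P i j := by
      rw [← Finset.sum_sub_distrib]
      exact Finset.sum_congr rfl fun i _ => by ring
    have h2 : (∑ i, πQ i * (P i j - Q i j)) =
        (∑ i, πQ i * P i j) - ∑ i, πQ i * Q i j := by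
      rw [← Finset.sum_sub_distrib]
      exact Finset.sum_congr rfl fun i _ => by ring
    rw [h1, h2, hπPstat j, hπQstat j]
    simp [hd]
  -- middle bound: (1-τ)*S ≤ ∑ j, |d j - ∑ i, d i * P i j|
  have hmid : (1 - τ) * S ≤ ∑ j, |d j - ∑ i, d i * P i j| := by
    rcases eq_or_lt_of_le hS0 with h0 | hSpos
    · rw [← h0, mul_zero]
      exact Finset.sum_nonneg fun j _ => abs_nonneg _
    · -- τ * S ≥ ∑ j, |∑ i, d i * P i j|
      have hτge : (∑ j, |∑ i, d i * P i j|) ≤ τ * S := by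
        have hsum0 : (∑ k, d k) = 0 := by
          simp only [hd, Finset.sum_sub_distrib, hπP1, hπQ1, sub_self]
        set w : Fin n → ℝ := fun k => d k / S with hw
        have hw0 : (∑ k, w k) = 0 := by
          simp only [hw, ← Finset.sum_div, hsum0, zero_div]
        have hw1 : (∑ k, |w k|) = 1 := by
          simp only [hw, abs_div, abs_of_nonneg hS0, ← Finset.sum_div, ← hS]
          exact div_self (ne_of_gt hSpos)
        have hmem : (∑ j, |∑ i, w i * P i j|) ∈
            {t : ℝ | ∃ v : Fin n → ℝ, (∑ k, v k) = 0 ∧ (∑ k, |v k|) = 1 ∧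
              t = ∑ j, |∑ i, v i * P i j|} := ⟨w, hw0, hw1, rfl⟩
        have hbdd : BddAbove {t : ℝ | ∃ v : Fin n → ℝ, (∑ k, v k) = 0 ∧
            (∑ k, |v k|) = 1 ∧ t = ∑ j, |∑ i, v i * P i j|} := by
          refine ⟨1, fun t ht => ?_⟩
          obtain ⟨v, _, hv1, rfl⟩ := ht
          calc (∑ j, |∑ i, v i * P i j|)
              ≤ ∑ j, ∑ i, |v i| * P i j := by
                refine Finset.sum_le_sum fun j _ => ?_
                refine (Finset.abs_sum_le_sum_abs _ _).trans ?_
                refine Finset.sum_le_sum fun i _ => ?_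
                rw [abs_mul, abs_of_nonneg (hposP i j)]
            _ = ∑ i, |v i| * ∑ j, P i j := by
                rw [Finset.sum_comm]
                exact Finset.sum_congr rfl fun i _ => by rw [Finset.mul_sum]
            _ = 1 := by simp only [hrowP, mul_one, hv1]
        have hle : (∑ j, |∑ i, w i * P i j|) ≤ τ := by
          rw [hτ]; exact le_csSup hbdd hmem
        have : (∑ j, |∑ i, d i * P i j|) = (∑ j, |∑ i, w i * P i j|) * S := by
          rw [Finset.sum_mul]
          refine Finset.sum_congr rfl fun j _ => ?_
          rw [← abs_of_nonneg hS0, ← abs_mul, Finset.sum_mul]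
          congr 1
          refine Finset.sum_congr rfl fun i _ => ?_
          simp only [hw]
          field_simp
        rw [this]
        exact mul_le_mul_of_nonneg_right hle hS0
      have htri : S - (∑ j, |∑ i, d i * P i j|) ≤
          ∑ j, |d j - ∑ i, d i * P i j| := by
        rw [hS, ← Finset.sum_sub_distrib]
        exact Finset.sum_le_sum fun j _ => abs_sub_abs_le_abs_sub _ _
      nlinarith
  -- combine
  have hfinal : (1 - τ) * S ≤ ε := by
    calc (1 - τ) * S ≤ ∑ j, |d j - ∑ i, d i * P i j| := hmid
      _ = ∑ j, |∑ i, πQ i * (P i j - Q i j)| :=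
          Finset.sum_congr rfl fun j _ => by rw [hkey j]
      _ ≤ ε := hεRHS
  rw [le_div_iff₀ hδ]
  linarith [hfinal]
end

section
/- Let P be a row-stochastic 2M×2M matrix, and define Q = A P I (the coarse-grained M×M matrix with Q(i,j) = (1/2)·Σ_{a∈{2i,2i+1}, b∈{2j,2j+1}} P(a,b)). If σ is a stationary probability vector of Q (σᵀQ = σᵀ) and the residual of the interpolated vector satisfies ‖(Iσ)ᵀP - (Iσ)ᵀ‖₁ ≤ ε, and π is the stationary distribution of P with δ = 1 - τ(P) > 0, then ‖Iσ - π‖₁ ≤ ε/δ, where (Iσ)(2k) = (Iσ)(2k+1) = σ(k)/2. -/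
lemma half_sum_aux (g : ℕ → ℝ) : ∀ N : ℕ,
    ∑ j ∈ Finset.range (2 * N), g (j / 2) = 2 * ∑ k ∈ Finset.range N, g k := by
  intro N
  induction N with
  | zero => simp
  | succ n ih =>
    have h : 2 * (n + 1) = 2 * n + 1 + 1 := by ring
    rw [h, Finset.sum_range_succ, Finset.sum_range_succ, ih, Finset.sum_range_succ]
    have h1 : (2 * n + 1) / 2 = n := by omega
    have h2 : (2 * n) / 2 = n := by omega
    rw [h1, h2]; ring

/-- Multilevel error bound: if `σ` is stationary for the coarse-grained
chain `Q = A P I`, the interpolated vector `Iσ` has residual at most `ε`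
with respect to `P`, and `δ = 1 - τ(P) > 0`, then `‖Iσ - π‖₁ ≤ ε/δ`. -/
theorem stmt16 (M : ℕ) (P : Matrix (Fin (2 * M)) (Fin (2 * M)) ℝ)
    (hpos : ∀ i j, 0 ≤ P i j) (hrow : ∀ i, ∑ j, P i j = 1)
    (Q : Matrix (Fin M) (Fin M) ℝ)
    (hQ : ∀ i j : Fin M,
      Q i j = (1 / 2) *
        (P ⟨2 * i.val, by have := i.isLt; omega⟩ ⟨2 * j.val, by have := j.isLt; omega⟩ +
         P ⟨2 * i.val, by have := i.isLt; omega⟩ ⟨2 * j.val + 1, by have := j.isLt; omega⟩ +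
         P ⟨2 * i.val + 1, by have := i.isLt; omega⟩ ⟨2 * j.val, by have := j.isLt; omega⟩ +
         P ⟨2 * i.val + 1, by have := i.isLt; omega⟩ ⟨2 * j.val + 1, by have := j.isLt; omega⟩))
    (σ : Fin M → ℝ)
    (hσ0 : ∀ k, 0 ≤ σ k) (hσ1 : ∑ k, σ k = 1)
    (hσstat : ∀ j, ∑ i, σ i * Q i j = σ j)
    (Iσ : Fin (2 * M) → ℝ)
    (hIσ : ∀ j : Fin (2 * M), Iσ j = σ ⟨j.val / 2, by have := j.isLt; omega⟩ / 2)
    (ε : ℝ)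
    (hres : (∑ j, |(∑ i, Iσ i * P i j) - Iσ j|) ≤ ε)
    (π : Fin (2 * M) → ℝ)
    (hπ0 : ∀ j, 0 ≤ π j) (hπ1 : ∑ j, π j = 1)
    (hπstat : ∀ j, ∑ i, π i * P i j = π j)
    (τ : ℝ)
    (hτ : τ = sSup {t : ℝ | ∃ v : Fin (2 * M) → ℝ, (∑ k, v k) = 0 ∧ (∑ k, |v k|) = 1 ∧
          t = ∑ j, |∑ i, v i * P i j|})
    (hδ : 0 < 1 - τ) :
    (∑ j, |Iσ j - π j|) ≤ ε / (1 - τ) := by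
  -- sum of the interpolated vector is 1
  have hIσsum : ∑ j, Iσ j = 1 := by
    set g : ℕ → ℝ := fun n => if h : n < M then σ ⟨n, h⟩ else 0 with hg
    have h1 : ∀ j : Fin (2 * M), Iσ j = g (j.val / 2) / 2 := by
      intro j
      rw [hIσ j, hg]
      have : j.val / 2 < M := by have := j.isLt; omega
      simp [this]
    calc ∑ j, Iσ j = ∑ j ∈ Finset.range (2 * M), g (j / 2) / 2 := by
            rw [← Fin.sum_univ_eq_sum_range (fun n => g (n / 2) / 2) (2 * M)]
            exact Finset.sum_congr rfl fun j _ => h1 j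
      _ = (∑ j ∈ Finset.range (2 * M), g (j / 2)) / 2 := by
            rw [Finset.sum_div]
      _ = (2 * ∑ k ∈ Finset.range M, g k) / 2 := by rw [half_sum_aux]
      _ = ∑ k ∈ Finset.range M, g k := by ring
      _ = ∑ k : Fin M, g k.val := (Fin.sum_univ_eq_sum_range g M).symm
      _ = ∑ k : Fin M, σ k := by
            refine Finset.sum_congr rfl fun k _ => ?_
            simp [hg, k.isLt]
      _ = 1 := hσ1
  set v : Fin (2 * M) → ℝ := fun j => Iσ j - π j with hv
  have hvsum : ∑ k, v k = 0 := by
    simp only [hv, Finset.sum_sub_distrib, hIσsum, hπ1, sub_self]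
  set S : ℝ := ∑ j, |v j| with hS
  have hS0 : 0 ≤ S := Finset.sum_nonneg fun j _ => abs_nonneg _
  have hε0 : 0 ≤ ε := le_trans (Finset.sum_nonneg fun j _ => abs_nonneg _) hres
  -- v P = r + v where r is the residual
  have hvP : ∀ j, (∑ i, v i * P i j) = ((∑ i, Iσ i * P i j) - Iσ j) + v j := by
    intro j
    have : (∑ i, v i * P i j) = (∑ i, Iσ i * P i j) - (∑ i, π i * P i j) := by
      rw [← Finset.sum_sub_distrib]
      exact Finset.sum_congr rfl fun i _ => by rw [hv]; ring
    rw [this, hπstat j, hv]; ring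
  -- key bound: ∑_j |∑_i v i P i j| ≤ τ * S
  have hkey : (∑ j, |∑ i, v i * P i j|) ≤ τ * S := by
    rcases eq_or_lt_of_le hS0 with h0 | h0
    · -- S = 0, so v = 0
      have hvz : ∀ j, v j = 0 := by
        intro j
        have := (Finset.sum_eq_zero_iff_of_nonneg (fun j _ => abs_nonneg (v j))).mp h0.symm
        exact abs_eq_zero.mp (this j (Finset.mem_univ j))
      have : (∑ j, |∑ i, v i * P i j|) = 0 := by
        refine Finset.sum_eq_zero fun j _ => ?_
        rw [abs_eq_zero]
        exact Finset.sum_eq_zero fun i _ => by rw [hvz i, zero_mul]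
      rw [this, ← h0, mul_zero]
    · -- normalize
      set w : Fin (2 * M) → ℝ := fun j => v j / S with hw
      have hwsum : ∑ k, w k = 0 := by
        simp only [hw, ← Finset.sum_div, hvsum, zero_div]
      have hwabs : ∑ k, |w k| = 1 := by
        have : ∀ k, |w k| = |v k| / S := by
          intro k; rw [hw]; rw [abs_div, abs_of_pos h0]
        simp only [this, ← Finset.sum_div, ← hS]
        exact div_self (ne_of_gt h0)
      set T : ℝ := ∑ j, |∑ i, w i * P i j| with hT
      have hbdd : BddAbove {t : ℝ | ∃ u : Fin (2 * M) → ℝ, (∑ k, u k) = 0 ∧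
          (∑ k, |u k|) = 1 ∧ t = ∑ j, |∑ i, u i * P i j|} := by
        refine ⟨1, fun t ht => ?_⟩
        obtain ⟨u, _, hu1, hteq⟩ := ht
        rw [hteq]
        calc (∑ j, |∑ i, u i * P i j|)
            ≤ ∑ j, ∑ i, |u i| * P i j := by
              refine Finset.sum_le_sum fun j _ => ?_
              refine le_trans (Finset.abs_sum_le_sum_abs _ _) ?_
              refine Finset.sum_le_sum fun i _ => ?_
              rw [abs_mul, abs_of_nonneg (hpos i j)]
          _ = ∑ i, |u i| * ∑ j, P i j := by
              rw [Finset.sum_comm]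
              exact Finset.sum_congr rfl fun i _ => (Finset.mul_sum _ _ _).symm
          _ = 1 := by simp only [hrow, mul_one]; exact hu1
      have hTτ : T ≤ τ := by
        rw [hτ]
        exact le_csSup hbdd ⟨w, hwsum, hwabs, hT⟩
      have hexp : (∑ j, |∑ i, v i * P i j|) = T * S := by
        rw [hT, Finset.sum_mul]
        refine Finset.sum_congr rfl fun j _ => ?_
        have : (∑ i, w i * P i j) = (∑ i, v i * P i j) / S := by
          rw [Finset.sum_div]
          exact Finset.sum_congr rfl fun i _ => by rw [hw]; ring
        rw [this, abs_div, abs_of_pos h0, div_mul_cancel₀ _ (ne_of_gt h0)]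
      rw [hexp]
      exact mul_le_mul_of_nonneg_right hTτ hS0
  -- S ≤ τ S + ε
  have hmain : S ≤ τ * S + ε := by
    have h1 : S ≤ (∑ j, |∑ i, v i * P i j|) + ∑ j, |(∑ i, Iσ i * P i j) - Iσ j| := by
      rw [hS, ← Finset.sum_add_distrib]
      refine Finset.sum_le_sum fun j _ => ?_
      have : v j = (∑ i, v i * P i j) - ((∑ i, Iσ i * P i j) - Iσ j) := by
        rw [hvP j]; ring
      rw [this]
      exact abs_sub (_) (_)
    calc S ≤ (∑ j, |∑ i, v i * P i j|) + ∑ j, |(∑ i, Iσ i * P i j) - Iσ j| := h1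
      _ ≤ τ * S + ε := add_le_add hkey hres
  have : (1 - τ) * S ≤ ε := by linarith
  rw [le_div_iff₀ hδ]
  linarith
end
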